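/- arXiv:2211.09075 — 7 statements merged into one kernel-verified Lean document; each statement's English description precedes it below -/
import Mathlib

section
/- Let M be a reduced N×N matrix over ZMod 2. Then for all indices 1 ≤ i ≤ N and 1 ≤ j ≤ N, the rank of the submatrix M[≥i,≤j] equals the number of column indices k ≤ j such that M_k ≠ 0 and low(M_k) ≥ i. -/
/-- `i` is the pivot of column `j` of `M`: the largest row index with a nonzero entry.
(Row/column `p : Fin N` corresponds to index `p+1 ∈ {1,…,N}` of the paper.) -/
def IsLow {N : ℕ} (M : Matrix (Fin N) (Fin N) (ZMod 2)) (i j : Fin N) : Prop :=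
  M i j ≠ 0 ∧ ∀ i' : Fin N, M i' j ≠ 0 → i' ≤ i

/-- A matrix is reduced if its nonzero columns have pairwise distinct pivots. -/
def IsReducedMat {N : ℕ} (M : Matrix (Fin N) (Fin N) (ZMod 2)) : Prop :=
  ∀ i j j' : Fin N, IsLow M i j → IsLow M i j' → j = j'

/-- `rankLL M a b` is the rank of the lower-left submatrix `M[≥ a, ≤ b]` formed by the
rows with (1-based) index `≥ a` and the columns with (1-based) index `≤ b`. -/
noncomputable def rankLL {N : ℕ} (M : Matrix (Fin N) (Fin N) (ZMod 2)) (a b : ℕ) : ℕ :=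
  (Matrix.of fun (p : {p : Fin N // a ≤ (p : ℕ) + 1}) (q : {q : Fin N // (q : ℕ) + 1 ≤ b}) =>
    M p.1 q.1).rank

/-- `V` is upper-triangular. -/
def UpperTri {N : ℕ} (V : Matrix (Fin N) (Fin N) (ZMod 2)) : Prop :=
  ∀ a b : Fin N, b < a → V a b = 0

/-! Restricting to the rows `≥ i` kills exactly the columns whose pivot is `< i` and leaves the
pivots of the other columns unchanged, so the surviving nonzero columns still have pairwise
distinct pivots. Such columns are linearly independent: in a vanishing combination, the row of
the largest pivot among the columns with nonzero coefficient meets only that one column. -/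

open Matrix

theorem linearIndependent_of_injective_pivot {ι m R : Type*} [Ring R] [NoZeroDivisors R]
    [LinearOrder m] (v : ι → m → R) (piv : ι → m) (hpiv : ∀ k, v k (piv k) ≠ 0)
    (hle : ∀ k r, v k r ≠ 0 → r ≤ piv k) (hinj : Function.Injective piv) :
    LinearIndependent R v := by
  classical
  rw [linearIndependent_iff']
  intro s g hg
  by_contra! hsupp
  obtain ⟨k, hks, hgk⟩ := hsupp
  obtain ⟨l, hl, hmax⟩ := (s.filter (g · ≠ 0)).exists_max_image piv ⟨k, by simp [hks, hgk]⟩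
  rw [Finset.mem_filter] at hl
  have hsum : ∑ a ∈ s, g a * v a (piv l) = g l * v l (piv l) := by
    refine Finset.sum_eq_single_of_mem l hl.1 fun a ha hal => ?_
    by_cases hga : g a = 0
    · rw [hga, zero_mul]
    have hlt : piv a < piv l := (hmax a (by simp [ha, hga])).lt_of_ne (hinj.ne hal)
    rw [not_imp_comm.1 (hle a _) hlt.not_ge, mul_zero]
  have hzero : ∑ a ∈ s, g a * v a (piv l) = 0 := by
    simpa using congrFun hg (piv l)
  exact mul_ne_zero hl.2 (hpiv l) (hsum ▸ hzero)

theorem Matrix.rank_eq_card_col_ne_zero {m n R : Type*} [Fintype n] [CommRing R]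
    [StrongRankCondition R] (A : Matrix m n R)
    (h : LinearIndependent R fun q : {q // A.col q ≠ 0} => A.col q) :
    A.rank = Nat.card {q // A.col q ≠ 0} := by
  classical
  have hrange : Set.range (fun q : {q // A.col q ≠ 0} => A.col q) = Set.range A.col \ {0} := by
    ext v; aesop
  have := nontrivial_of_invariantBasisNumber R
  rw [rank_eq_finrank_span_cols, ← Submodule.span_sdiff_singleton_zero, ← hrange,
    Nat.card_eq_fintype_card, finrank_span_eq_card h]

theorem Matrix.rank_eq_card_col_ne_zero_of_injective_pivot {m n R : Type*} [Fintype n]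
    [CommRing R] [IsDomain R] [LinearOrder m] (A : Matrix m n R)
    (piv : {q // A.col q ≠ 0} → m) (hpiv : ∀ q, A (piv q) q.1 ≠ 0)
    (hle : ∀ q r, A r q.1 ≠ 0 → r ≤ piv q) (hinj : Function.Injective piv) :
    A.rank = Nat.card {q // A.col q ≠ 0} :=
  A.rank_eq_card_col_ne_zero <|
    linearIndependent_of_injective_pivot (fun q : {q // A.col q ≠ 0} => A.col q.1) piv hpiv hle
      hinj

theorem exists_isLow_of_ne_zero {N : ℕ} {M : Matrix (Fin N) (Fin N) (ZMod 2)} {p k : Fin N}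
    (h : M p k ≠ 0) : ∃ q, IsLow M q k ∧ p ≤ q := by
  classical
  let s := Finset.univ.filter (M · k ≠ 0)
  have hp : p ∈ s := by simp [s, h]
  exact ⟨s.max' ⟨p, hp⟩, ⟨(Finset.mem_filter.1 (s.max'_mem _)).2,
    fun r hr => s.le_max' r (by simp [s, hr])⟩, s.le_max' p hp⟩

theorem exists_ne_zero_ge_iff_exists_isLow {N : ℕ} {M : Matrix (Fin N) (Fin N) (ZMod 2)}
    {i k : Fin N} : (∃ p, i ≤ p ∧ M p k ≠ 0) ↔ ∃ p, IsLow M p k ∧ i ≤ p := by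
  constructor
  · rintro ⟨p, hip, hp⟩
    obtain ⟨q, hq, hpq⟩ := exists_isLow_of_ne_zero hp
    exact ⟨q, hq, hip.trans hpq⟩
  · rintro ⟨p, hp, hip⟩
    exact ⟨p, hip, hp.1⟩

/-- For a reduced matrix `M`, the rank of `M[≥ i, ≤ j]` equals the number of columns
`k ≤ j` that are nonzero with pivot `≥ i`. -/
theorem rank_lowerLeft_eq_card_pivots {N : ℕ} (M : Matrix (Fin N) (Fin N) (ZMod 2))
    (hM : IsReducedMat M) :
    ∀ i j : Fin N,
      rankLL M ((i : ℕ) + 1) ((j : ℕ) + 1) =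
        Nat.card {k : Fin N // k ≤ j ∧ ∃ p : Fin N, IsLow M p k ∧ i ≤ p} := by
  intro i j
  let A : Matrix {p : Fin N // (i : ℕ) + 1 ≤ (p : ℕ) + 1}
      {q : Fin N // (q : ℕ) + 1 ≤ (j : ℕ) + 1} (ZMod 2) := M.submatrix Subtype.val Subtype.val
  change A.rank = _
  have hcol : ∀ q, A.col q ≠ 0 ↔ ∃ p, IsLow M p q.1 ∧ i ≤ p := fun q => by
    rw [← exists_ne_zero_ge_iff_exists_isLow, Function.ne_iff, Subtype.exists]
    simp only [Pi.zero_apply, col_apply, A, submatrix_apply, add_le_add_iff_right,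
      Fin.val_fin_le, exists_prop]
  choose piv hlow hipiv using fun q : {q // A.col q ≠ 0} => (hcol q).1 q.2
  have hinj : Function.Injective piv := fun q q' h =>
    Subtype.ext <| Subtype.ext <| hM _ _ _ (hlow q) (h ▸ hlow q')
  rw [A.rank_eq_card_col_ne_zero_of_injective_pivot
    (fun q => ⟨piv q, Nat.succ_le_succ (hipiv q)⟩) (fun q => (hlow q).1)
    (fun q r hr => (hlow q).2 r.1 hr)
    fun q q' h => hinj (congrArg Subtype.val h)]
  exact Nat.card_congr <| (Equiv.subtypeEquivRight hcol).trans <|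
    (Equiv.subtypeSubtypeEquivSubtypeInter (fun k : Fin N => (k : ℕ) + 1 ≤ j + 1)
      (fun k => ∃ p, IsLow M p k ∧ i ≤ p)).trans <|
    Equiv.subtypeEquivRight fun k => and_congr_left' (by rw [Fin.le_def]; omega)
end

section
/- Let D be an N×N matrix over ZMod 2 and let V be an invertible upper-triangular N×N matrix over ZMod 2. Then for all indices 1 ≤ i ≤ N and 1 ≤ j ≤ N, the rank of (D·V)[≥i,≤j] equals the rank of D[≥i,≤j]. In particular, matrix reduction by left-to-right column additions preserves the ranks of all lower-left submatrices. -/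
/-!
Columns `≤ j` form a lower set, and an upper-triangular `V` only mixes a column with earlier
ones, so `(D * V)[≥i, ≤j] = D[≥i, ≤j] * V[≤j, ≤j]`. The principal block `V[≤j, ≤j]` is again
upper triangular, with diagonal entries among those of `V`; these are units because
`det V = ∏ k, V k k` is. Multiplying by a matrix of unit determinant preserves rank.
-/

namespace Matrix

variable {ι κ m n R : Type*} [LinearOrder ι] [CommRing R]

theorem IsUpperTriangular.submatrix_of_strictMono [LinearOrder κ] {V : Matrix ι ι R}
    (hV : V.IsUpperTriangular) {f : κ → ι} (hf : StrictMono f) :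
    (V.submatrix f f).IsUpperTriangular :=
  fun _ _ h => hV (hf h)

theorem IsUpperTriangular.isUnit_det_submatrix [LinearOrder κ] [Fintype ι] [DecidableEq ι]
    [Fintype κ] [DecidableEq κ] {V : Matrix ι ι R} (hV : V.IsUpperTriangular)
    (hdet : IsUnit V.det) {f : κ → ι} (hf : StrictMono f) :
    IsUnit (V.submatrix f f).det := by
  rw [det_of_isUpperTriangular hV, IsUnit.prod_univ_iff] at hdet
  rw [det_of_isUpperTriangular (hV.submatrix_of_strictMono hf), IsUnit.prod_univ_iff]
  exact fun k => hdet (f k)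

theorem IsUpperTriangular.mul_submatrix_of_isLowerSet [Fintype ι] {V : Matrix ι ι R}
    (hV : V.IsUpperTriangular) (D : Matrix m ι R) {P : ι → Prop} [DecidablePred P]
    (hP : IsLowerSet {k | P k}) (r : n → m) :
    (D * V).submatrix r ((↑) : Subtype P → ι) =
      D.submatrix r ((↑) : Subtype P → ι) * V.submatrix ((↑) : Subtype P → ι) (↑) := by
  ext p q
  have hvanish : ∀ k : {k // ¬P k}, D (r p) k * V k q = 0 := fun k =>
    mul_eq_zero_of_right _ <| hV <| lt_of_not_ge fun hkq => k.2 (hP hkq q.2)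
  rw [mul_apply, submatrix_apply, mul_apply, ← Fintype.sum_subtype_add_sum_subtype P,
    Finset.sum_eq_zero fun k _ => hvanish k, add_zero]
  rfl

end Matrix

/-- Right-multiplication by an invertible upper-triangular matrix preserves the ranks of
all lower-left submatrices `D[≥ i, ≤ j]`. -/
theorem rank_lowerLeft_mul_upperTri {N : ℕ} (D V : Matrix (Fin N) (Fin N) (ZMod 2))
    (hV : IsUnit V) (hVt : UpperTri V) :
    ∀ i j : Fin N,
      rankLL (D * V) ((i : ℕ) + 1) ((j : ℕ) + 1) = rankLL D ((i : ℕ) + 1) ((j : ℕ) + 1) := by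
  intro i j
  have hVu : V.IsUpperTriangular := fun a b h => hVt a b h
  have hcols : IsLowerSet {q : Fin N | (q : ℕ) + 1 ≤ (j : ℕ) + 1} :=
    fun a b hba ha => le_trans (Nat.succ_le_succ hba) ha
  have hblock := Matrix.IsUpperTriangular.isUnit_det_submatrix hVu
    ((V.isUnit_iff_isUnit_det).mp hV) (Subtype.strictMono_coe fun q : Fin N => (q : ℕ) + 1 ≤ (j : ℕ) + 1)
  have hsplit := Matrix.IsUpperTriangular.mul_submatrix_of_isLowerSet hVu D hcols
    (Subtype.val : {p : Fin N // (i : ℕ) + 1 ≤ (p : ℕ) + 1} → Fin N)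
  exact (congrArg Matrix.rank hsplit).trans (Matrix.rank_mul_eq_left_of_isUnit_det _ _ hblock)
end

section
/- Let D be an N×N matrix over ZMod 2, V an invertible upper-triangular N×N matrix over ZMod 2 with R = D·V reduced. Then for all 1 ≤ i, j ≤ N, the rank of D[≥i,≤j] equals the number of pivot pairs (a,b) of R with a ≥ i and b ≤ j. -/
open Function Submodule

namespace Matrix

variable {l m n K : Type*}

/-- `IsLow M` and `IsReducedMat M` unfold to `M.IsPivot` and to injectivity of its pivots,
which the final proof uses definitionally. -/
def IsPivot [Zero K] [LinearOrder m] (A : Matrix m n K) (p : m) (q : n) : Prop :=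
  A p q ≠ 0 ∧ ∀ p', A p' q ≠ 0 → p' ≤ p

theorem exists_isPivot [Zero K] [LinearOrder m] [Fintype m] (A : Matrix m n K) {q : n}
    (hq : A.col q ≠ 0) : ∃ p, A.IsPivot p q := by
  classical
  obtain ⟨p₀, hp₀⟩ := Function.ne_iff.1 hq
  obtain ⟨p, hp, hmax⟩ :=
    (Finset.univ.filter (A · q ≠ 0)).exists_max_image id ⟨p₀, by simpa using hp₀⟩
  exact ⟨p, (Finset.mem_filter.1 hp).2, fun p' hp' => hmax p' (by simpa using hp')⟩

theorem linearIndependent_of_injective_pivot {ι : Type*} [Ring K] [NoZeroDivisors K]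
    [LinearOrder m] {v : ι → m → K} {piv : ι → m} (hinj : Injective piv)
    (hpiv : ∀ i, v i (piv i) ≠ 0) (hzero : ∀ i p, piv i < p → v i p = 0) :
    LinearIndependent K v := by
  classical
  rw [linearIndependent_iff']
  intro s g hg i hi
  by_contra hgi
  obtain ⟨i₀, hi₀, hmax⟩ :=
    (s.filter (g · ≠ 0)).exists_max_image piv ⟨i, Finset.mem_filter.2 ⟨hi, hgi⟩⟩
  obtain ⟨hi₀s, hgi₀⟩ := Finset.mem_filter.1 hi₀
  have hsum := congrFun hg (piv i₀)
  rw [Finset.sum_apply, Finset.sum_eq_single_of_mem i₀ hi₀s] at hsum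
  · exact mul_ne_zero hgi₀ (hpiv i₀) hsum
  · intro j hj hji
    by_cases hgj : g j = 0
    · simp [hgj]
    · have hlt : piv j < piv i₀ :=
        (hmax j (Finset.mem_filter.2 ⟨hj, hgj⟩)).lt_of_ne (hinj.ne hji)
      simp [hzero j _ hlt]

theorem rank_eq_card_isPivot [Field K] [LinearOrder m] [Fintype m] [Fintype n]
    (A : Matrix m n K) (hA : ∀ p q q', A.IsPivot p q → A.IsPivot p q' → q = q') :
    A.rank = Nat.card {pq : m × n // A.IsPivot pq.1 pq.2} := by
  classical
  let v : {pq : m × n // A.IsPivot pq.1 pq.2} → m → K := fun pq => A.col pq.1.2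
  have hinj : Injective fun pq : {pq : m × n // A.IsPivot pq.1 pq.2} => pq.1.1 := by
    rintro ⟨⟨p, q⟩, hpq⟩ ⟨⟨_, q'⟩, hpq'⟩ (rfl : p = _)
    obtain rfl := hA p q q' hpq hpq'
    rfl
  have hli : LinearIndependent K v :=
    linearIndependent_of_injective_pivot hinj (fun pq => pq.2.1)
      (fun pq _ hp => not_not.1 fun h => (pq.2.2 _ h).not_gt hp)
  have hspan : span K (Set.range v) = span K (Set.range A.col) := by
    refine le_antisymm (span_mono ?_) (span_le.2 ?_)
    · rintro _ ⟨pq, rfl⟩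
      exact ⟨_, rfl⟩
    · rintro _ ⟨q, rfl⟩
      by_cases hq : A.col q = 0
      · simp [hq]
      · obtain ⟨p, hp⟩ := A.exists_isPivot hq
        exact subset_span ⟨⟨(p, q), hp⟩, rfl⟩
  rw [rank_eq_finrank_span_cols, ← hspan, finrank_span_eq_card hli, Nat.card_eq_fintype_card]

theorem isPivot_toBlock_iff [Zero K] [LinearOrder m] {P : m → Prop} {Q : n → Prop}
    (hP : ∀ ⦃a b⦄, a ≤ b → P a → P b) (A : Matrix m n K) (p : {a // P a}) (q : {b // Q b}) :
    (A.toBlock P Q).IsPivot p q ↔ A.IsPivot p q := by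
  refine ⟨fun ⟨hpq, hmax⟩ => ⟨hpq, fun p' hp' => ?_⟩,
    fun ⟨hpq, hmax⟩ => ⟨hpq, fun p' hp' => hmax p' hp'⟩⟩
  rcases le_total p' p with h | h
  · exact h
  · exact hmax ⟨p', hP h p.2⟩ hp'

theorem rank_toBlock_eq_card_isPivot [Field K] [LinearOrder m] [Fintype m] [Fintype n]
    {A : Matrix m n K} (hA : ∀ p q q', A.IsPivot p q → A.IsPivot p q' → q = q')
    {P : m → Prop} {Q : n → Prop} [DecidablePred P] [DecidablePred Q]
    (hP : ∀ ⦃a b⦄, a ≤ b → P a → P b) :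
    (A.toBlock P Q).rank = Nat.card {pq : m × n // A.IsPivot pq.1 pq.2 ∧ P pq.1 ∧ Q pq.2} := by
  rw [rank_eq_card_isPivot]
  · refine Nat.card_congr
      { toFun := fun pq => ⟨(pq.1.1, pq.1.2), (isPivot_toBlock_iff hP A _ _).1 pq.2,
          pq.1.1.2, pq.1.2.2⟩
        invFun := fun pq => ⟨(⟨pq.1.1, pq.2.2.1⟩, ⟨pq.1.2, pq.2.2.2⟩),
          (isPivot_toBlock_iff hP A _ _).2 pq.2.1⟩
        left_inv := fun _ => rfl
        right_inv := fun _ => rfl }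
  · intro p q q' hq hq'
    rw [isPivot_toBlock_iff hP] at hq hq'
    exact Subtype.ext (hA _ _ _ hq hq')

theorem BlockTriangular.toBlock_mul [CommRing K] [Fintype m] [LinearOrder l] {V : Matrix m m K}
    {b : m → l} (hV : V.BlockTriangular b) (k : l) (D : Matrix n m K) (P : n → Prop) :
    (D * V).toBlock P (b · < k) = D.toBlock P (b · < k) * V.toBlock (b · < k) (b · < k) := by
  classical
  have hzero : V.toBlock (¬b · < k) (b · < k) = 0 := by
    ext i j
    exact hV (j.2.trans_le (not_lt.1 i.2))
  rw [toBlock_mul_eq_add P (b · < k), hzero, Matrix.mul_zero, add_zero]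

theorem BlockTriangular.rank_toBlock_mul [CommRing K] [Fintype m] [DecidableEq m] [LinearOrder l]
    {V : Matrix m m K} {b : m → l} (hV : V.BlockTriangular b) [Invertible V] (k : l)
    (D : Matrix n m K) (P : n → Prop) :
    ((D * V).toBlock P (b · < k)).rank = (D.toBlock P (b · < k)).rank := by
  let := hV.invertibleToBlock k
  rw [hV.toBlock_mul, rank_mul_eq_left_of_isUnit_det _ _ (isUnit_det_of_invertible _)]

end Matrix

/-- The rank of `D[≥ i, ≤ j]` equals the number of pivot pairs `(a,b)` of the reduced matrix
`R = D * V` with `a ≥ i` and `b ≤ j`. -/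
theorem rank_lowerLeft_eq_card_pivotPairs {N : ℕ} (D V : Matrix (Fin N) (Fin N) (ZMod 2))
    (hV : IsUnit V) (hVt : UpperTri V) (hR : IsReducedMat (D * V)) :
    ∀ i j : Fin N,
      rankLL D ((i : ℕ) + 1) ((j : ℕ) + 1) =
        Nat.card {ab : Fin N × Fin N // IsLow (D * V) ab.1 ab.2 ∧ i ≤ ab.1 ∧ ab.2 ≤ j} := by
  intro i j
  let := hV.invertible
  have hVb : V.BlockTriangular (fun q : Fin N => (q : ℕ)) := hVt
  have hrows : ∀ ⦃a b : Fin N⦄, a ≤ b → (i : ℕ) + 1 ≤ a + 1 → (i : ℕ) + 1 ≤ b + 1 :=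
    fun a b hab ha => by rw [Fin.le_def] at hab; omega
  -- `(q : ℕ) < j + 1` unfolds to the column condition `q + 1 ≤ j + 1` of `rankLL`.
  calc rankLL D ((i : ℕ) + 1) ((j : ℕ) + 1)
      = ((D * V).toBlock (fun p : Fin N => (i : ℕ) + 1 ≤ p + 1)
          (fun q => (q : ℕ) < (j : ℕ) + 1)).rank := (hVb.rank_toBlock_mul _ _ _).symm
    _ = Nat.card {ab : Fin N × Fin N //
          IsLow (D * V) ab.1 ab.2 ∧ (i : ℕ) + 1 ≤ ab.1 + 1 ∧ (ab.2 : ℕ) < (j : ℕ) + 1} :=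
        Matrix.rank_toBlock_eq_card_isPivot hR hrows
    _ = _ := Nat.card_congr (Equiv.subtypeEquivRight fun _ => and_congr_right fun _ => by
        simp only [Fin.le_def]; omega)
end

section
/- (Correctness of the swap reduction step) Let M be an N×N matrix over ZMod 2 and let j' < j be column indices such that M_{j'} and M_j are nonzero with low(M_{j'}) = low(M_j), and such that the nonzero columns among M_1, …, M_{j−1} have pairwise distinct pivots. Let M' be the matrix obtained from M by swapping columns j' and j. Then for all 1 ≤ i ≤ N and 1 ≤ m ≤ N, rank M'[≥i,≤m] = rank M[≥i,≤m]. -/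
/-!
Nonzero vectors with pairwise distinct pivots are linearly independent (look at the highest
pivot occurring in a relation), so a matrix whose nonzero columns have distinct pivots has rank
equal to its number of nonzero columns. Restricting to the rows below a given index keeps the
pivot of every column that stays nonzero, as the retained rows form an upper set.

For a block `M[≥i,≤m]` with `m < j`, all columns precede `j`, so their pivots are distinct, and
the swap moves no pivot at all because `M_{j'}` and `M_j` share the pivot `p`; hence both blocks
have the same nonzero columns and the same rank. For `m ≥ j` the swap only permutes the columns
of the block.
-/

open Matrix

section Pivot

variable {ρ ι F : Type*} [LinearOrder ρ]

def IsPivot [Zero F] (v : ρ → F) (r : ρ) : Prop :=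
  v r ≠ 0 ∧ ∀ r', v r' ≠ 0 → r' ≤ r

def HasDistinctPivots [Zero F] (v : ι → ρ → F) : Prop :=
  ∀ k l r, IsPivot (v k) r → IsPivot (v l) r → k = l

variable [Zero F] {v w : ι → ρ → F}

theorem IsPivot.unique {u : ρ → F} {r s : ρ} (hr : IsPivot u r) (hs : IsPivot u s) : r = s :=
  le_antisymm (hs.2 r hr.1) (hr.2 s hs.1)

theorem exists_isPivot_iff [Fintype ρ] {u : ρ → F} : (∃ r, IsPivot u r) ↔ u ≠ 0 := by
  classical
  refine ⟨fun ⟨r, hr⟩ hu => hr.1 (by simp [hu]), fun hu => ?_⟩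
  obtain ⟨r₀, hr₀⟩ := Function.ne_iff.mp hu
  obtain ⟨r, hr, hmax⟩ := (Finset.univ.filter fun r => u r ≠ 0).exists_max_image id
    ⟨r₀, by simpa using hr₀⟩
  exact ⟨r, (Finset.mem_filter.mp hr).2, fun r' hr' => hmax r' (by simpa using hr')⟩

theorem isPivot_restrict_iff {P : ρ → Prop} (hP : Monotone P) (u : ρ → F) {r : Subtype P} :
    IsPivot (fun x : Subtype P => u x) r ↔ IsPivot u r := by
  refine ⟨fun h => ⟨h.1, fun r' hr' => ?_⟩, fun h => ⟨h.1, fun r' hr' => h.2 r' hr'⟩⟩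
  by_cases hr'P : P r'
  · exact h.2 ⟨r', hr'P⟩ hr'
  · exact le_of_lt (not_le.mp fun hle => hr'P (hP hle r.2))

theorem HasDistinctPivots.of_isPivot_iff (hv : HasDistinctPivots v)
    (hvw : ∀ k r, IsPivot (v k) r ↔ IsPivot (w k) r) : HasDistinctPivots w :=
  fun k l r hk hl => hv k l r ((hvw k r).mpr hk) ((hvw l r).mpr hl)

end Pivot

section Rank

variable {ρ ι F : Type*} [LinearOrder ρ] [Fintype ρ] [DivisionRing F] {v w : ι → ρ → F}

theorem HasDistinctPivots.linearIndependent (hv : HasDistinctPivots v) (hne : ∀ k, v k ≠ 0) :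
    LinearIndependent F v := by
  classical
  choose piv hpiv using fun k => exists_isPivot_iff.mpr (hne k)
  rw [linearIndependent_iff']
  intro s g hsum k hk
  by_contra hgk
  -- evaluate the relation at the highest pivot among the columns with nonzero coefficient
  obtain ⟨l, hl, hmax⟩ := (s.filter fun l => g l ≠ 0).exists_max_image piv
    ⟨k, Finset.mem_filter.mpr ⟨hk, hgk⟩⟩
  obtain ⟨hls, hgl⟩ := Finset.mem_filter.mp hl
  have hvanish : ∀ b ∈ s, b ≠ l → g b * v b (piv l) = 0 := by
    intro b hb hbl
    by_cases hgb : g b = 0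
    · simp [hgb]
    have hlt : piv b < piv l := lt_of_le_of_ne (hmax b (Finset.mem_filter.mpr ⟨hb, hgb⟩))
      fun h => hbl (hv b l (piv l) (h ▸ hpiv b) (hpiv l))
    have hzero : v b (piv l) = 0 := not_ne_iff.mp fun h => not_le.mpr hlt ((hpiv b).2 _ h)
    rw [hzero, mul_zero]
  have h0 := congr_fun hsum (piv l)
  simp only [Finset.sum_apply, Pi.smul_apply, smul_eq_mul, Pi.zero_apply] at h0
  rw [Finset.sum_eq_single l hvanish (absurd hls)] at h0
  exact mul_ne_zero hgl (hpiv l).1 h0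

theorem HasDistinctPivots.finrank_span_eq_card [Fintype ι] (hv : HasDistinctPivots v) :
    Module.finrank F (Submodule.span F (Set.range v)) = Nat.card {k // v k ≠ 0} := by
  classical
  have hrange : Set.range (fun k : {k // v k ≠ 0} => v k) = Set.range v \ {0} := by
    ext x
    simp only [Set.mem_range, Set.mem_sdiff, Set.mem_singleton_iff, Subtype.exists]
    exact ⟨fun ⟨k, hk, hx⟩ => ⟨⟨k, hx⟩, hx ▸ hk⟩, fun ⟨⟨k, hx⟩, h0⟩ => ⟨k, hx ▸ h0, hx⟩⟩
  rw [← Submodule.span_sdiff_singleton_zero, ← hrange, Nat.card_eq_fintype_card]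
  exact _root_.finrank_span_eq_card <| HasDistinctPivots.linearIndependent
    (fun k l r hk hl => Subtype.ext (hv k l r hk hl)) fun k => k.2

theorem finrank_span_eq_of_isPivot_iff [Fintype ι] (hv : HasDistinctPivots v)
    (hvw : ∀ k r, IsPivot (v k) r ↔ IsPivot (w k) r) :
    Module.finrank F (Submodule.span F (Set.range v)) =
      Module.finrank F (Submodule.span F (Set.range w)) := by
  rw [hv.finrank_span_eq_card, (hv.of_isPivot_iff hvw).finrank_span_eq_card]
  refine Nat.card_congr (Equiv.subtypeEquivRight fun k => ?_)
  simp only [← exists_isPivot_iff, hvw]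

end Rank

section LowerLeftRank

variable {N : ℕ} {M M' : Matrix (Fin N) (Fin N) (ZMod 2)}

theorem IsLow.iff_eq {p c : Fin N} (hp : IsLow M p c) {i : Fin N} : IsLow M i c ↔ i = p :=
  ⟨fun hi => IsPivot.unique (u := fun r => M r c) hi hp, fun h => h ▸ hp⟩

theorem isLow_submatrix_swap_iff {p a b : Fin N} (ha : IsLow M p a) (hb : IsLow M p b)
    {i c : Fin N} : IsLow (M.submatrix id (Equiv.swap a b)) i c ↔ IsLow M i c := by
  change IsLow M i (Equiv.swap a b c) ↔ _
  rw [Equiv.swap_apply_def]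
  split_ifs with hca hcb
  · rw [hca, hb.iff_eq, ha.iff_eq]
  · rw [hcb, hb.iff_eq, ha.iff_eq]
  · rfl

theorem rankLL_eq_of_isLow_iff {a b : ℕ}
    (hM : ∀ i c c' : Fin N, (c : ℕ) + 1 ≤ b → (c' : ℕ) + 1 ≤ b →
      IsLow M i c → IsLow M i c' → c = c')
    (hM' : ∀ i c : Fin N, (c : ℕ) + 1 ≤ b → (IsLow M' i c ↔ IsLow M i c)) :
    rankLL M' a b = rankLL M a b := by
  have hrows : Monotone fun p : Fin N => a ≤ (p : ℕ) + 1 := fun _ _ h ha => by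
    have := Fin.le_def.mp h; omega
  have hlow : ∀ (A : Matrix (Fin N) (Fin N) (ZMod 2)) (k : {q : Fin N // (q : ℕ) + 1 ≤ b}) r,
      IsPivot (fun x : {p : Fin N // a ≤ (p : ℕ) + 1} => A x k) r ↔ IsLow A r k :=
    fun A k _ => isPivot_restrict_iff hrows fun x => A x k
  unfold rankLL
  rw [rank_eq_finrank_span_cols, rank_eq_finrank_span_cols]
  symm
  refine finrank_span_eq_of_isPivot_iff (fun k l r hk hl => ?_) fun k r => ?_
  · exact Subtype.ext <| hM r k l k.2 l.2 ((hlow M k r).mp hk) ((hlow M l r).mp hl)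
  · exact (hlow M k r).trans <| (hM' r k k.2).symm.trans (hlow M' k r).symm

theorem rankLL_submatrix_perm {a b : ℕ} (σ : Equiv.Perm (Fin N))
    (hσ : ∀ q : Fin N, (q : ℕ) + 1 ≤ b ↔ (σ q : ℕ) + 1 ≤ b) :
    rankLL (M.submatrix id σ) a b = rankLL M a b := by
  unfold rankLL
  conv_rhs => rw [← rank_submatrix _ (Equiv.refl _) (σ.subtypeEquiv hσ)]
  rfl

end LowerLeftRank

/-- Correctness of the swap reduction step: if columns `j' < j` are nonzero with the same
pivot and the nonzero columns strictly before `j` have pairwise distinct pivots, then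
swapping columns `j'` and `j` preserves the ranks of all lower-left submatrices. -/
theorem swap_step_preserves_rank {N : ℕ} (M : Matrix (Fin N) (Fin N) (ZMod 2))
    (j' j : Fin N) (hjj : j' < j) (p : Fin N)
    (hpj' : IsLow M p j') (hpj : IsLow M p j)
    (hred : ∀ (i : Fin N) (a b : Fin N), a < j → b < j → IsLow M i a → IsLow M i b → a = b) :
    ∀ i m : Fin N,
      rankLL (M.submatrix id (Equiv.swap j' j)) ((i : ℕ) + 1) ((m : ℕ) + 1) =
        rankLL M ((i : ℕ) + 1) ((m : ℕ) + 1) := by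
  intro i m
  have hjj : (j' : ℕ) < j := hjj
  by_cases hmj : (m : ℕ) < j
  · refine rankLL_eq_of_isLow_iff (fun x c c' hc hc' => hred x c c' ?_ ?_)
      fun x c _ => isLow_submatrix_swap_iff hpj' hpj
    · exact Fin.lt_def.mpr (by omega)
    · exact Fin.lt_def.mpr (by omega)
  · refine rankLL_submatrix_perm _ fun q => ?_
    rw [Equiv.swap_apply_def]
    split_ifs with h₁ h₂
    · subst h₁; omega
    · subst h₂; omega
    · rfl
end

section
/- (Each index appears in at most one pivot pair) Let D be an N×N matrix over ZMod 2 with D·D = 0, let V be an invertible upper-triangular N×N matrix over ZMod 2, and suppose R = D·V is reduced. If i = low(R_j) for some nonzero column R_j, then the i-th column of R is zero. Consequently, no index i occurs both as the first coordinate of a pivot pair and as the second coordinate of a pivot pair of R. -/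
theorem Matrix.IsUpperTriangular.isUnit_diag {n R : Type*} [Fintype n] [LinearOrder n]
    [CommRing R] {A : Matrix n n R} (hA : A.IsUpperTriangular) (hdet : IsUnit A.det) (i : n) :
    IsUnit (A i i) :=
  (IsUnit.prod_univ_iff (f := fun k => A k k)).mp (Matrix.det_of_isUpperTriangular hA ▸ hdet) i

open Matrix in
theorem IsReducedMat.col_eq_zero_of_mulVec_eq_zero {N : ℕ} {R : Matrix (Fin N) (Fin N) (ZMod 2)}
    (hR : IsReducedMat R) {c : Fin N → ZMod 2} (hc : R *ᵥ c = 0) {q : Fin N} (hq : c q ≠ 0) :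
    ∀ p, R p q = 0 := by
  classical
  by_contra! hcol
  set T := Finset.univ.filter fun x => ∃ q, c q ≠ 0 ∧ R x q ≠ 0
  have hT : T.Nonempty := by
    obtain ⟨p, hp⟩ := hcol
    exact ⟨p, Finset.mem_filter.mpr ⟨Finset.mem_univ p, q, hq, hp⟩⟩
  set m := T.max' hT
  have hlow : ∀ q, c q ≠ 0 → R m q ≠ 0 → IsLow R m q := fun q hcq hRq =>
    ⟨hRq, fun x hx => T.le_max' x (Finset.mem_filter.mpr ⟨Finset.mem_univ x, q, hcq, hx⟩)⟩
  obtain ⟨q₀, hcq₀, hRq₀⟩ : ∃ q, c q ≠ 0 ∧ R m q ≠ 0 :=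
    (Finset.mem_filter.mp (T.max'_mem hT)).2
  have hsum : (R *ᵥ c) m = R m q₀ * c q₀ := by
    refine Finset.sum_eq_single q₀ (fun q _ hne => ?_) (fun h => absurd (Finset.mem_univ _) h)
    by_contra h
    obtain ⟨hRq, hcq⟩ := mul_ne_zero_iff.mp h
    exact hne (hR _ _ _ (hlow q hcq hRq) (hlow q₀ hcq₀ hRq₀))
  exact mul_ne_zero hRq₀ hcq₀ (hsum ▸ congrFun hc m)

/-- Each index appears in at most one pivot pair: if `D * D = 0` and `R = D * V` is reduced
(`V` invertible upper-triangular), then whenever `i` is the pivot of some nonzero column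
`R_j`, the `i`-th column of `R` is zero; consequently `i` cannot also occur as the second
coordinate of a pivot pair. -/
theorem pivot_row_column_zero {N : ℕ} (D V : Matrix (Fin N) (Fin N) (ZMod 2))
    (hD : D * D = 0) (hV : IsUnit V) (hVt : UpperTri V) (hR : IsReducedMat (D * V)) :
    ∀ i j : Fin N, IsLow (D * V) i j →
      (∀ p : Fin N, (D * V) p i = 0) ∧ ¬ ∃ i' : Fin N, IsLow (D * V) i' i := by
  intro i j hlow
  have hdet : IsUnit V.det := (Matrix.isUnit_iff_isUnit_det V).mp hV
  have : Invertible V := V.invertibleOfIsUnitDet hdet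
  have hVinv : V⁻¹.IsUpperTriangular := Matrix.blockTriangular_inv_of_blockTriangular hVt
  have hrel : D * V * (V⁻¹ * (D * V)) = 0 := by
    rw [← Matrix.mul_assoc, Matrix.mul_assoc D, Matrix.mul_nonsing_inv _ hdet, Matrix.mul_one,
      ← Matrix.mul_assoc, hD, Matrix.zero_mul]
  have hcoeff : (V⁻¹ * (D * V)) i j = V⁻¹ i i * (D * V) i j := by
    rw [Matrix.mul_apply]
    refine Finset.sum_eq_single i (fun p _ hpi => ?_) (fun h => absurd (Finset.mem_univ _) h)
    rcases hpi.lt_or_gt with hp | hp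
    · rw [hVinv hp, zero_mul]
    · rw [not_ne_iff.mp (mt (hlow.2 p) hp.not_ge), mul_zero]
  have hcol : ∀ p, (D * V) p i = 0 :=
    hR.col_eq_zero_of_mulVec_eq_zero (c := fun q => (V⁻¹ * (D * V)) q j)
      (funext fun x => congrFun (congrFun hrel x) j)
      (hcoeff ▸ mul_ne_zero
        (hVinv.isUnit_diag (Matrix.isUnit_nonsing_inv_det V hdet) i).ne_zero hlow.1)
  exact ⟨hcol, fun ⟨i', h⟩ => h.1 (hcol i')⟩
end

section
/- (Correctness of the clearing optimization) Let D be an N×N matrix over ZMod 2 with D·D = 0, and suppose i is a positive index of D, i.e., there exists j such that (i,j) is a pivot pair of D. Let D' be the matrix obtained from D by setting the entire i-th column to zero. Then the pivot pairs of D' coincide exactly with the pivot pairs of D. -/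
/-- `(i,j)` is a pivot pair of `D`: it is a pivot pair of some reduced matrix `D * V` with
`V` invertible and upper-triangular (this does not depend on the choice of `V`). -/
def IsPivotPairOf {N : ℕ} (D : Matrix (Fin N) (Fin N) (ZMod 2)) (i j : Fin N) : Prop :=
  ∃ V : Matrix (Fin N) (Fin N) (ZMod 2),
    IsUnit V ∧ UpperTri V ∧ IsReducedMat (D * V) ∧ IsLow (D * V) i j

namespace Matrix

variable {n R : Type*}

theorem det_one_updateCol [Fintype n] [DecidableEq n] [CommRing R] (i : n) (v : n → R) :
    ((1 : Matrix n n R).updateCol i v).det = v i := by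
  rw [← cramer_apply, cramer_one, Module.End.one_apply]

theorem isUnit_one_updateCol_iff [Fintype n] [DecidableEq n] [CommRing R] {i : n}
    {v : n → R} : IsUnit ((1 : Matrix n n R).updateCol i v) ↔ IsUnit (v i) := by
  rw [isUnit_iff_isUnit_det, det_one_updateCol]

theorem blockTriangular_one_updateCol [LinearOrder n] [Zero R] [One R] {i : n} {v : n → R}
    (hv : ∀ p, i < p → v p = 0) : ((1 : Matrix n n R).updateCol i v).BlockTriangular id := by
  intro p q (hqp : q < p)
  obtain rfl | hq := eq_or_ne q i
  · simpa using hv p hqp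
  · simpa [hq] using one_apply_ne hqp.ne'

end Matrix

open Matrix

variable {N : ℕ}

theorem UpperTri.mul {M M' : Matrix (Fin N) (Fin N) (ZMod 2)} (hM : UpperTri M)
    (hM' : UpperTri M') : UpperTri (M * M') :=
  BlockTriangular.mul hM hM'

theorem UpperTri.inv {M : Matrix (Fin N) (Fin N) (ZMod 2)} (hMu : IsUnit M) (hM : UpperTri M) :
    UpperTri M⁻¹ :=
  have := hMu.invertible
  blockTriangular_inv_of_blockTriangular hM

theorem IsPivotPairOf.of_mul {D W : Matrix (Fin N) (Fin N) (ZMod 2)} (hWu : IsUnit W)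
    (hWt : UpperTri W) {a b : Fin N} (h : IsPivotPairOf (D * W) a b) : IsPivotPairOf D a b := by
  obtain ⟨V, hVu, hVt, hred, hlow⟩ := h
  rw [Matrix.mul_assoc] at hred hlow
  exact ⟨W * V, hWu.mul hVu, hWt.mul hVt, hred, hlow⟩

theorem isPivotPairOf_mul_iff {D W : Matrix (Fin N) (Fin N) (ZMod 2)} (hWu : IsUnit W)
    (hWt : UpperTri W) {a b : Fin N} : IsPivotPairOf (D * W) a b ↔ IsPivotPairOf D a b := by
  refine ⟨IsPivotPairOf.of_mul hWu hWt, fun h => IsPivotPairOf.of_mul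
    (isUnit_nonsing_inv_iff.mpr hWu) (hWt.inv hWu) ?_⟩
  rwa [mul_nonsing_inv_cancel_right _ _ ((isUnit_iff_isUnit_det W).mp hWu)]

/-- Correctness of the clearing optimization: if `D * D = 0` and `i` is a positive index of
`D` (i.e. `(i,j)` is a pivot pair of `D` for some `j`), then setting the `i`-th column of
`D` to zero does not change the pivot pairs. -/
theorem clearing_correct {N : ℕ} (D : Matrix (Fin N) (Fin N) (ZMod 2)) (hD : D * D = 0)
    (i j : Fin N) (hpos : IsPivotPairOf D i j) :
    ∀ a b : Fin N,
      IsPivotPairOf (Matrix.of fun p q => if q = i then 0 else D p q) a b ↔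
        IsPivotPairOf D a b := by
  obtain ⟨V, -, -, -, hlow_ne, hlow_le⟩ := hpos
  have hDR : D *ᵥ (D * V).col j = 0 := by
    rw [← mulVec_single_one, mulVec_mulVec, ← Matrix.mul_assoc, hD, Matrix.zero_mul, zero_mulVec]
  set W := (1 : Matrix (Fin N) (Fin N) (ZMod 2)).updateCol i ((D * V).col j)
  have hcleared : (Matrix.of fun p q => if q = i then 0 else D p q) = D * W := by
    rw [mul_updateCol, Matrix.mul_one, hDR]
    ext p q
    by_cases hq : q = i <;> simp [hq]
  have hWu : IsUnit W := isUnit_one_updateCol_iff.mpr (isUnit_iff_ne_zero.mpr hlow_ne)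
  have hWt : UpperTri W :=
    blockTriangular_one_updateCol fun p hip => by_contra fun hp => (hlow_le p hp).not_gt hip
  intro a b
  rw [hcleared, isPivotPairOf_mul_iff hWu hWt]
end

section
/- (Reduction from MaxCut, core of the NP-hardness of Sparse-Z2) Let G be a finite simple graph with vertex set V and m edges, and let M be the edge–vertex incidence matrix of G over ZMod 2 (rows indexed by edges, columns by vertices). Let W be the all-ones vector indexed by edges. Then the minimum, over all a : V → ZMod 2, of the number of nonzero entries of W + M·a equals m minus the maximum cut of G, where the maximum cut of G is the maximum, over all subsets S of V, of the number of edges of G with exactly one endpoint in S. -/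
/-!
The entry of `W + M·a` at an edge `uw` is `1 + a u + a w`, which over `ZMod 2` vanishes exactly
when `a u ≠ a w`, i.e. when `uw` is cut by `{v | a v = 1}`. So for the indicator vector `a` of
`S`, `W + M·a` has `m - cut(S)` nonzero entries, and since every `a` is an indicator vector,
minimising the weight over `a` is maximising the cut over `S`.
-/

/-- The edge–vertex incidence matrix of a simple graph `G` over `ZMod 2`: rows are indexed
by the edges of `G`, columns by the vertices, with entry `1` in position `(e,v)` exactly
when `v` is an endpoint of `e`. -/
def edgeIncMatrix {V : Type*} [DecidableEq V] (G : SimpleGraph V) :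
    Matrix G.edgeSet V (ZMod 2) :=
  fun e v => if v ∈ (e : Sym2 V) then 1 else 0

open Matrix

theorem Nat.card_subtype_not {α : Type*} [Finite α] (p : α → Prop) :
    Nat.card {x // ¬ p x} = Nat.card α - Nat.card {x // p x} := by
  classical
  have := Fintype.ofFinite α
  simp only [Nat.card_eq_fintype_card]
  exact Fintype.card_subtype_compl p

theorem Sym2.exists_eq_mk_mem_notMem_iff {V : Type*} (S : Finset V) (u w : V) :
    (∃ u' w', s(u, w) = s(u', w') ∧ u' ∈ S ∧ w' ∉ S) ↔ ¬ (u ∈ S ↔ w ∈ S) := by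
  constructor
  · rintro ⟨u', w', huw, hu', hw'⟩
    rcases Sym2.eq_iff.mp huw with ⟨rfl, rfl⟩ | ⟨rfl, rfl⟩ <;> tauto
  · intro h
    by_cases hu : u ∈ S
    · exact ⟨u, w, rfl, hu, by tauto⟩
    · exact ⟨w, u, Sym2.eq_swap, by tauto, hu⟩

theorem ZMod.one_add_indicator_add_indicator_ne_zero_iff {V : Type*} (S : Set V) (u w : V) :
    (1 : ZMod 2) + (S.indicator 1 u + S.indicator 1 w) ≠ 0 ↔ (u ∈ S ↔ w ∈ S) := by
  by_cases hu : u ∈ S <;> by_cases hw : w ∈ S <;> simp [hu, hw] <;> decide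

theorem ZMod.exists_finset_indicator_eq {V : Type*} [Fintype V] (a : V → ZMod 2) :
    ∃ S : Finset V, (S : Set V).indicator 1 = a := by
  classical
  refine ⟨{v | a v = 1}.toFinset, funext fun v => ?_⟩
  simp only [Set.coe_toFinset, Set.indicator_apply, Set.mem_ofPred_eq, Pi.one_apply]
  generalize a v = x
  decide +revert

noncomputable def SimpleGraph.cutSize {V : Type*} (G : SimpleGraph V) (S : Finset V) : ℕ :=
  Nat.card {e : G.edgeSet // ∃ u w : V, (e : Sym2 V) = s(u, w) ∧ u ∈ S ∧ w ∉ S}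

section

variable {V : Type*} [Fintype V] [DecidableEq V] (G : SimpleGraph V)

theorem edgeIncMatrix_mulVec_mk (a : V → ZMod 2) {u w : V} (h : s(u, w) ∈ G.edgeSet) :
    (edgeIncMatrix G *ᵥ a) ⟨s(u, w), h⟩ = a u + a w := by
  refine (Fintype.sum_eq_add u w (G.ne_of_adj h) fun v hv => ?_).trans ?_
  · simp [edgeIncMatrix, hv.1, hv.2]
  · simp [edgeIncMatrix]

theorem one_add_edgeIncMatrix_mulVec_indicator_ne_zero_iff (S : Finset V) (e : G.edgeSet) :
    (1 : ZMod 2) + (edgeIncMatrix G *ᵥ (S : Set V).indicator 1) e ≠ 0 ↔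
      ¬ ∃ u w : V, (e : Sym2 V) = s(u, w) ∧ u ∈ S ∧ w ∉ S := by
  obtain ⟨e, he⟩ := e
  induction e using Sym2.ind with
  | _ u w =>
    rw [edgeIncMatrix_mulVec_mk, ZMod.one_add_indicator_add_indicator_ne_zero_iff,
      Sym2.exists_eq_mk_mem_notMem_iff, not_not, Finset.mem_coe, Finset.mem_coe]

theorem card_one_add_edgeIncMatrix_mulVec_indicator_ne_zero (S : Finset V) :
    Nat.card {e : G.edgeSet //
        (1 : ZMod 2) + (edgeIncMatrix G *ᵥ (S : Set V).indicator 1) e ≠ 0} =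
      Nat.card G.edgeSet - G.cutSize S := by
  rw [SimpleGraph.cutSize, ← Nat.card_subtype_not]
  exact Nat.card_congr
    (Equiv.subtypeEquivRight (one_add_edgeIncMatrix_mulVec_indicator_ne_zero_iff G S))

end

/-- Reduction from MaxCut: the minimum over all `a : V → ZMod 2` of the number of nonzero
entries of `W + M·a` (with `W` the all-ones vector and `M` the edge–vertex incidence matrix
of `G` over `ZMod 2`) equals the number of edges of `G` minus the maximum cut of `G`, the
latter being the maximum over all subsets `S` of the vertices of the number of edges with
exactly one endpoint in `S`. -/
theorem sparseZ2_eq_m_sub_maxCut {V : Type*} [Fintype V] [DecidableEq V]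
    (G : SimpleGraph V) :
    Finset.univ.inf' Finset.univ_nonempty
        (fun a : V → ZMod 2 =>
          Nat.card {e : G.edgeSet // (1 : ZMod 2) + (edgeIncMatrix G).mulVec a e ≠ 0}) =
      Nat.card G.edgeSet -
        Finset.univ.sup (fun S : Finset V =>
          Nat.card {e : G.edgeSet // ∃ u w : V, (e : Sym2 V) = s(u, w) ∧ u ∈ S ∧ w ∉ S}) := by
  change _ = Nat.card G.edgeSet - Finset.univ.sup G.cutSize
  obtain ⟨S, -, hS⟩ := Finset.exists_mem_eq_sup Finset.univ Finset.univ_nonempty G.cutSize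
  refine le_antisymm ?_ (Finset.le_inf' _ _ fun a _ => ?_)
  · rw [hS, ← card_one_add_edgeIncMatrix_mulVec_indicator_ne_zero]
    exact Finset.inf'_le _ (Finset.mem_univ _)
  · obtain ⟨T, rfl⟩ := ZMod.exists_finset_indicator_eq a
    rw [card_one_add_edgeIncMatrix_mulVec_indicator_ne_zero]
    exact Nat.sub_le_sub_left (Finset.le_sup (Finset.mem_univ T)) _
end
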